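/- arXiv:2407.20422 — 2 statements merged into one kernel-verified Lean document; each statement's English description precedes it below -/
import Mathlib

section
/- Occurrence-counting Monge inequality: for any symbol p and strings u, v, u', v', if |ov(u,v)| ≥ max{|ov(u,v')|, |ov(u',v)|}, then |ov(u,v)|_p + |ov(u',v')|_p ≥ |ov(u,v')|_p + |ov(u',v)|_p. -/
/-- The length of the overlap of `s` and `t`: the longest `y` such that
`s = x ++ y` and `t = y ++ z` with `x, z` non-empty. -/
def ovLen {α : Type*} [DecidableEq α] (s t : List α) : ℕ :=
  Nat.findGreatest
    (fun k => k < s.length ∧ k < t.length ∧ s.drop (s.length - k) = t.take k)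
    (min s.length t.length)

/-- The overlap of `s` and `t`. -/
def ov {α : Type*} [DecidableEq α] (s t : List α) : List α :=
  t.take (ovLen s t)

/-- The prefix part of `s` with respect to `t`: `s = pre s t ++ ov s t`. -/
def pre {α : Type*} [DecidableEq α] (s t : List α) : List α :=
  s.take (s.length - ovLen s t)

/-- The suffix part of `t` with respect to `s`: `t = ov s t ++ suf s t`. -/
def suf {α : Type*} [DecidableEq α] (s t : List α) : List α :=
  t.drop (ovLen s t)

lemma ovLen_spec {α : Type*} [DecidableEq α] {s t : List α} (hs : s ≠ []) (ht : t ≠ []) :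
    ovLen s t < s.length ∧ ovLen s t < t.length ∧
      s.drop (s.length - ovLen s t) = t.take (ovLen s t) :=
  Nat.findGreatest_spec (P := fun k => k < s.length ∧ k < t.length ∧
      s.drop (s.length - k) = t.take k) (Nat.zero_le _)
    ⟨List.length_pos_iff.2 hs, List.length_pos_iff.2 ht, by simp⟩

lemma le_ovLen {α : Type*} [DecidableEq α] {s t : List α} {k : ℕ}
    (h1 : k < s.length) (h2 : k < t.length) (h3 : s.drop (s.length - k) = t.take k) :
    k ≤ ovLen s t :=
  Nat.le_findGreatest (le_min h1.le h2.le) ⟨h1, h2, h3⟩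

/-- Occurrence-counting Monge inequality for overlaps. -/
theorem stmt_3 {α : Type*} [DecidableEq α] (p : α) (u v u' v' : List α)
    (hne : ∀ x ∈ [u, v, u', v'], x ≠ ([] : List α))
    (hnosub : ∀ x ∈ [u, v, u', v'], ∀ y ∈ [u, v, u', v'], x ≠ y → ¬ x <:+: y)
    (h : (ov u v).length ≥ max (ov u v').length (ov u' v).length) :
    (ov u v).count p + (ov u' v').count p ≥
      (ov u v').count p + (ov u' v).count p := by
  have hu : u ≠ [] := hne u (by simp)
  have hv : v ≠ [] := hne v (by simp)
  have hu' : u' ≠ [] := hne u' (by simp)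
  have hv' : v' ≠ [] := hne v' (by simp)
  obtain ⟨ha1, ha2, ha3⟩ := ovLen_spec hu hv
  obtain ⟨hb1, hb2, hb3⟩ := ovLen_spec hu hv'
  obtain ⟨hc1, hc2, hc3⟩ := ovLen_spec hu' hv
  set la := ovLen u v with hla
  set lb := ovLen u v' with hlb
  set lc := ovLen u' v with hlc
  -- lengths of overlaps
  have lena : (ov u v).length = la := by
    simp [ov, ← hla, Nat.min_eq_left ha2.le]
  have lenb : (ov u v').length = lb := by
    simp [ov, ← hlb, Nat.min_eq_left hb2.le]
  have lenc : (ov u' v).length = lc := by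
    simp [ov, ← hlc, Nat.min_eq_left hc2.le]
  have hba : lb ≤ la := by
    have := le_of_max_le_left h; omega
  have hca : lc ≤ la := by
    have := le_of_max_le_right h; omega
  -- a, b, c
  set a := ov u v with haa
  set b := ov u v' with hbb
  set c := ov u' v with hcc
  -- c is a prefix of a
  have hc_pref : a.take lc = c := by
    rw [haa, hcc, ov, ov, ← hla, ← hlc, List.take_take, Nat.min_eq_left hca]
  -- b is a suffix of a : a.drop (la - lb) = b
  have hb_suf : a.drop (la - lb) = b := by
    rw [haa, hbb, ov, ov, ← hla, ← hlb, ← ha3, List.drop_drop, ← hb3]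
    congr 1
    omega
  -- split a
  set t1 := a.take (la - lb) with ht1
  have ht1len : t1.length = la - lb := by
    rw [ht1, List.length_take, lena]; omega
  have hsplit : a = t1 ++ b := by
    rw [ht1, ← hb_suf, List.take_append_drop]
  by_cases hcase : lb + lc ≤ la
  · -- disjoint case: c is a prefix of t1
    have : t1.take lc = c := by
      rw [ht1, List.take_take, Nat.min_eq_left (by omega), hc_pref]
    have h1 : c.count p ≤ t1.count p := by
      rw [← this]; exact ((List.take_prefix _ _).sublist).count_le p
    have h2 : a.count p = t1.count p + b.count p := by
      rw [hsplit, List.count_append]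
    omega
  · -- overlapping case
    push_neg at hcase
    set ly := lb + lc - la with hly
    set y := b.take ly with hy
    have hylen : y.length = ly := by
      rw [hy, List.length_take, lenb]; omega
    -- c = t1 ++ y
    have hcy : c = t1 ++ y := by
      rw [← hc_pref, hsplit, List.take_append, ht1len,
        List.take_of_length_le (by rw [ht1len]; omega)]
      congr 2
      omega
    -- y = v'.take ly : prefix of v'
    have hy_v' : y = v'.take ly := by
      rw [hy, hbb, ov, ← hlb, List.take_take, Nat.min_eq_left (by omega)]
    -- y is a suffix of u' : u'.drop (u'.length - ly) = v'.take ly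
    have hy_u' : u'.drop (u'.length - ly) = v'.take ly := by
      have hcd : c.drop (la - lb) = y := by
        rw [hcy, List.drop_append, ht1len, Nat.sub_self,
          List.drop_eq_nil_of_le (le_of_eq ht1len), List.nil_append, List.drop_zero]
      rw [← hy_v', ← hcd, hcc, ov, ← hlc, ← hc3, List.drop_drop]
      congr 1
      omega
    have hly_le : ly ≤ ovLen u' v' :=
      le_ovLen (by omega) (by omega) hy_u'
    -- y is a prefix of ov u' v'
    have hy_pref : (ov u' v').take ly = y := by
      rw [ov, List.take_take, Nat.min_eq_left hly_le, hy_v']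
    have h1 : y.count p ≤ (ov u' v').count p := by
      rw [← hy_pref]; exact ((List.take_prefix _ _).sublist).count_le p
    have h2 : a.count p = t1.count p + b.count p := by
      rw [hsplit, List.count_append]
    have h3 : c.count p = t1.count p + y.count p := by
      rw [hcy, List.count_append]
    omega
end

section
/- In the overlap graph, the merge of s and t (the string pref(s,t)·ov(s,t)·suff(s,t)) is the shortest string having s as a prefix and t as a suffix, provided neither of s, t is a substring of the other. -/
/-!
Write `L = ovLen s t`. The merge has `s` as a prefix and `t` as a suffix, and length
`|s| + |t| - L`. Conversely, if `m` has `s` as a prefix and `t` as a suffix and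
`|m| < |s| + |t|`, then `s` and `t` overlap inside `m` in `k = |s| + |t| - |m|` letters.
Since neither string is a substring of the other, `m` is neither `s` nor `t`, so `k` is
smaller than both lengths and is an admissible overlap; maximality of `L` gives `k ≤ L`.
-/

theorem List.drop_eq_take_of_prefix_of_suffix {α : Type*} {s t m : List α} {k : ℕ}
    (hs : s <+: m) (ht : t <:+ m) (hk : s.length + t.length = m.length + k) :
    s.drop (s.length - k) = t.take k := by
  have htm : t.length ≤ m.length := ht.length_le
  calc s.drop (s.length - k)
      = (m.take s.length).drop (s.length - k) := by rw [← List.prefix_iff_eq_take.mp hs]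
    _ = (m.drop (m.length - t.length)).take k := by
        rw [List.drop_take, show s.length - (s.length - k) = k by omega,
          show s.length - k = m.length - t.length by omega]
    _ = t.take k := by rw [← List.suffix_iff_eq_drop.mp ht]

section Overlap

variable {α : Type*} [DecidableEq α] (s t : List α)

theorem ovLen_le_length_right : ovLen s t ≤ t.length :=
  (Nat.findGreatest_le _).trans (min_le_right _ _)

theorem drop_ovLen_eq_take_ovLen :
    s.drop (s.length - ovLen s t) = t.take (ovLen s t) := by
  by_cases h : ovLen s t = 0
  · simp [h]
  · exact (Nat.findGreatest_of_ne_zero rfl h).2.2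

theorem le_ovLen_s16 {k : ℕ} (hks : k < s.length) (hkt : k < t.length)
    (hk : s.drop (s.length - k) = t.take k) : k ≤ ovLen s t :=
  Nat.le_findGreatest (le_min hks.le hkt.le) ⟨hks, hkt, hk⟩

theorem pre_append_ov : pre s t ++ ov s t = s := by
  rw [pre, ov, ← drop_ovLen_eq_take_ovLen, List.take_append_drop]

theorem ov_append_suf : ov s t ++ suf s t = t :=
  List.take_append_drop _ _

theorem length_merge :
    (pre s t ++ ov s t ++ suf s t).length = s.length + t.length - ovLen s t := by
  have := ovLen_le_length_right s t
  rw [pre_append_ov, List.length_append, suf, List.length_drop]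
  omega

theorem length_sub_ovLen_le_of_prefix_of_suffix {m : List α}
    (hst : ¬ s <:+: t) (hts : ¬ t <:+: s) (hsm : s <+: m) (htm : t <:+ m) :
    s.length + t.length - ovLen s t ≤ m.length := by
  by_contra! hlt
  set k := s.length + t.length - m.length
  have hks : k < s.length := by
    by_contra! hge
    have hmt : m = t := (htm.eq_of_length (by have := htm.length_le; omega)).symm
    exact hst (hmt ▸ hsm.isInfix)
  have hkt : k < t.length := by
    by_contra! hge
    have hms : m = s := (hsm.eq_of_length (by have := hsm.length_le; omega)).symm
    exact hts (hms ▸ htm.isInfix)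
  have hk := le_ovLen_s16 s t hks hkt
    (List.drop_eq_take_of_prefix_of_suffix hsm htm (by omega))
  omega

end Overlap

theorem stmt_16_general {α : Type*} [DecidableEq α] (s t : List α)
    (hst : ¬ s <:+: t) (hts : ¬ t <:+: s) :
    s <+: (pre s t ++ ov s t ++ suf s t) ∧
    t <:+ (pre s t ++ ov s t ++ suf s t) ∧
    ∀ m : List α, s <+: m → t <:+ m →
      (pre s t ++ ov s t ++ suf s t).length ≤ m.length := by
  refine ⟨?_, ?_, fun m hsm htm => ?_⟩
  · rw [pre_append_ov]
    exact List.prefix_append _ _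
  · rw [List.append_assoc, ov_append_suf]
    exact List.suffix_append _ _
  · rw [length_merge]
    exact length_sub_ovLen_le_of_prefix_of_suffix s t hst hts hsm htm

/-- The merge `pref(s,t)·ov(s,t)·suff(s,t)` is the shortest string having `s`
as a prefix and `t` as a suffix, provided neither is a substring of the other. -/
theorem stmt_16 {α : Type*} [DecidableEq α] (s t : List α)
    (hs : s ≠ []) (ht : t ≠ [])
    (hst : ¬ s <:+: t) (hts : ¬ t <:+: s) :
    s <+: (pre s t ++ ov s t ++ suf s t) ∧
    t <:+ (pre s t ++ ov s t ++ suf s t) ∧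
    ∀ m : List α, s <+: m → t <:+ m →
      (pre s t ++ ov s t ++ suf s t).length ≤ m.length :=
  stmt_16_general s t hst hts
end
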